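/- Let p be prime, e ≥ 5, k ≥ 1, d ≥ 2. Then p^{ek} ∑_{i=0}^{e-1} √(p^{dek + dik − ik}(2p^{−ik−k} + 1 + p^{−ek})) ≤ √(6 + 3e) · p^{dek − dk/2 + ek/2 + k/2}. -/
import Mathlib

/-- Clean closed-form bound for the technical threshold in the single dot product
theorem. -/
theorem stmt_16 (p : ℕ) (hp : p.Prime) (e k d : ℕ) (he : 5 ≤ e) (hk : 1 ≤ k)
    (hd : 2 ≤ d) :
    (p : ℝ) ^ (e * k) *
        ∑ i ∈ Finset.range e,
          Real.sqrt ((p : ℝ) ^ (d * e * k + d * i * k - i * k) *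
            (2 * (p : ℝ) ^ (-(i * k : ℤ) - (k : ℤ)) + 1 + (p : ℝ) ^ (-(e * k : ℤ))))
      ≤ Real.sqrt (6 + 3 * e) *
          (p : ℝ) ^ ((d * e * k : ℝ) - (d * k : ℝ) / 2 + (e * k : ℝ) / 2 + (k : ℝ) / 2) := by
  have hp2 : (2:ℝ) ≤ (p:ℝ) := by exact_mod_cast hp.two_le
  have hP0 : (0:ℝ) < (p:ℝ) := by linarith
  set P : ℝ := (p:ℝ) with hPdef
  -- auxiliary: P^(-(n:ℤ)) ≤ (1/2)^m for m ≤ n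
  have aux : ∀ n m : ℕ, m ≤ n → P ^ (-(n:ℤ)) ≤ (1/2:ℝ)^m := by
    intro n m hmn
    rw [zpow_neg, zpow_natCast]
    have h1 : (2:ℝ)^m ≤ P^n := by
      calc (2:ℝ)^m ≤ (2:ℝ)^n := by
            exact pow_le_pow_right₀ (by norm_num) hmn
        _ ≤ P^n := by exact pow_le_pow_left₀ (by norm_num) hp2 n
    rw [one_div, inv_pow]
    exact inv_anti₀ (by positivity) h1
  set c : ℕ → ℝ := fun i => 2 * P ^ (-(i * k : ℤ) - (k : ℤ)) + 1 + P ^ (-(e * k : ℤ)) with hc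
  set N : ℕ → ℕ := fun i => d * e * k + d * i * k - i * k with hN
  set M : ℕ := d * e * k + (d-1) * (e-1) * k with hM
  have hNi : ∀ i : ℕ, N i = d * e * k + (d-1) * i * k := by
    intro i
    have h : (d-1) * i * k + i * k = d * i * k := by
      have hd1 : d - 1 + 1 = d := by omega
      calc (d-1) * i * k + i * k = ((d-1)+1) * i * k := by ring
        _ = d * i * k := by rw [hd1]
    simp only [hN]
    omega
  have hcpos : ∀ i, 0 < c i := by
    intro i
    have h1 : (0:ℝ) < P ^ (-(i * k : ℤ) - (k : ℤ)) := zpow_pos hP0 _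
    have h2 : (0:ℝ) < P ^ (-(e * k : ℤ)) := zpow_pos hP0 _
    simp only [hc]; linarith
  -- bound on ∑ P^(N i)
  have hsumN : ∑ i ∈ Finset.range e, P ^ (N i) ≤ 2 * P ^ M := by
    have hterm : ∀ i ∈ Finset.range e, P ^ (N i) ≤ P ^ M * (1/2:ℝ)^(e-1-i) := by
      intro i hi
      rw [Finset.mem_range] at hi
      rw [hNi i]
      have key : (2:ℝ)^(e-1-i) * P ^ (d * e * k + (d-1) * i * k) ≤ P ^ M := by
        have h2 : (2:ℝ)^(e-1-i) ≤ P^((d-1)*(e-1-i)*k) := by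
          calc (2:ℝ)^(e-1-i) ≤ (2:ℝ)^((d-1)*(e-1-i)*k) := by
                apply pow_le_pow_right₀ (by norm_num)
                calc e-1-i ≤ 1 * (e-1-i) * 1 := by ring_nf; omega
                  _ ≤ (d-1)*(e-1-i)*k := by
                      apply Nat.mul_le_mul (Nat.mul_le_mul (by omega) le_rfl) hk
            _ ≤ P^((d-1)*(e-1-i)*k) := pow_le_pow_left₀ (by norm_num) hp2 _
        calc (2:ℝ)^(e-1-i) * P ^ (d * e * k + (d-1) * i * k)
            ≤ P^((d-1)*(e-1-i)*k) * P ^ (d * e * k + (d-1) * i * k) := by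
              apply mul_le_mul_of_nonneg_right h2 (by positivity)
          _ = P ^ ((d-1)*(e-1-i)*k + (d * e * k + (d-1) * i * k)) := by
              rw [← pow_add]
          _ = P ^ M := by
              congr 1
              simp only [hM]
              have h3 : (d-1)*(e-1-i)*k + (d-1)*i*k = (d-1)*(e-1)*k := by
                have : (e-1-i) + i = e-1 := by omega
                calc (d-1)*(e-1-i)*k + (d-1)*i*k = (d-1)*((e-1-i)+i)*k := by ring_nf
                  _ = (d-1)*(e-1)*k := by rw [this]
              omega
      have hhalf : ((1:ℝ)/2)^(e-1-i) = ((2:ℝ)^(e-1-i))⁻¹ := by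
        rw [one_div, inv_pow]
      rw [hhalf, ← div_eq_mul_inv, le_div_iff₀ (by positivity), mul_comm]
      exact key
    calc ∑ i ∈ Finset.range e, P ^ (N i)
        ≤ ∑ i ∈ Finset.range e, P ^ M * (1/2:ℝ)^(e-1-i) := Finset.sum_le_sum hterm
      _ = P ^ M * ∑ i ∈ Finset.range e, (1/2:ℝ)^(e-1-i) := by rw [← Finset.mul_sum]
      _ = P ^ M * ∑ i ∈ Finset.range e, (1/2:ℝ)^i := by
          congr 1
          rw [← Finset.sum_range_reflect]
          apply Finset.sum_congr rfl
          intro i hi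
          rw [Finset.mem_range] at hi
          congr 1
          omega
      _ ≤ P ^ M * 2 := by
          apply mul_le_mul_of_nonneg_left (sum_geometric_two_le e) (by positivity)
      _ = 2 * P ^ M := by ring
  -- bound on ∑ c i
  have hsumc : ∑ i ∈ Finset.range e, c i ≤ 2 + (3/2) * e := by
    have hterm : ∀ i ∈ Finset.range e, c i ≤ (1/2:ℝ)^i + 1 + 1/2 := by
      intro i _
      have h1 : P ^ (-(i * k : ℤ) - (k : ℤ)) ≤ (1/2:ℝ)^(i+1) := by
        have : (-(i * k : ℤ) - (k : ℤ)) = -(((i+1)*k : ℕ) : ℤ) := by push_cast; ring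
        rw [this]
        apply aux _ _ (by nlinarith)
      have h2 : P ^ (-(e * k : ℤ)) ≤ (1/2:ℝ)^1 := by
        have : (-(e * k : ℤ)) = -((e*k : ℕ) : ℤ) := by push_cast; ring
        rw [this]
        apply aux _ _ (by nlinarith)
      have h3 : 2 * ((1/2:ℝ)^(i+1)) = (1/2:ℝ)^i := by
        rw [pow_succ]; ring
      simp only [hc]
      nlinarith [h1, h2]
    calc ∑ i ∈ Finset.range e, c i
        ≤ ∑ i ∈ Finset.range e, ((1/2:ℝ)^i + 1 + 1/2) := Finset.sum_le_sum hterm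
      _ = (∑ i ∈ Finset.range e, (1/2:ℝ)^i) + e * (3/2) := by
          rw [Finset.sum_add_distrib, Finset.sum_add_distrib]
          simp [Finset.sum_const, Finset.card_range]
          ring
      _ ≤ 2 + (3/2) * e := by
          have := sum_geometric_two_le e
          linarith
  -- Cauchy-Schwarz
  set S : ℝ := ∑ i ∈ Finset.range e, Real.sqrt (P ^ (N i) * c i) with hS
  have hS0 : 0 ≤ S := Finset.sum_nonneg fun i _ => Real.sqrt_nonneg _
  have hCS : S ^ 2 ≤ (∑ i ∈ Finset.range e, P ^ (N i)) * ∑ i ∈ Finset.range e, c i := by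
    apply Finset.sum_sq_le_sum_mul_sum_of_sq_eq_mul
    · intro i _; positivity
    · intro i _; exact (hcpos i).le
    · intro i _
      exact Real.sq_sqrt (by positivity)
  have hM2 : S ^ 2 ≤ (6 + 3 * e) * P ^ M := by
    calc S ^ 2 ≤ (∑ i ∈ Finset.range e, P ^ (N i)) * ∑ i ∈ Finset.range e, c i := hCS
      _ ≤ (2 * P ^ M) * (2 + (3/2) * e) := by
          apply mul_le_mul hsumN hsumc (Finset.sum_nonneg fun i _ => (hcpos i).le) (by positivity)
      _ = (4 + 3 * e) * P ^ M := by ring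
      _ ≤ (6 + 3 * e) * P ^ M := by
          apply mul_le_mul_of_nonneg_right (by norm_num) (by positivity)
  have hSle : S ≤ Real.sqrt (6 + 3 * e) * P ^ ((M : ℝ)/2) := by
    have h1 : S ≤ Real.sqrt ((6 + 3 * e) * P ^ M) := by
      rw [show ((6:ℝ) + 3 * e) * P ^ M = Real.sqrt (((6 + 3 * e) * P ^ M))^2 by
        rw [Real.sq_sqrt (by positivity)]] at hM2
      exact (pow_le_pow_iff_left₀ hS0 (Real.sqrt_nonneg _) (by norm_num)).mp hM2
    calc S ≤ Real.sqrt ((6 + 3 * e) * P ^ M) := h1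
      _ = Real.sqrt (6 + 3 * e) * Real.sqrt (P ^ M) := Real.sqrt_mul (by positivity) _
      _ = Real.sqrt (6 + 3 * e) * P ^ ((M : ℝ)/2) := by
          congr 1
          rw [Real.sqrt_eq_rpow, ← Real.rpow_natCast P M, ← Real.rpow_mul hP0.le]
          congr 1
          ring
  -- put it together
  have hmain : P ^ (e * k) * S ≤ Real.sqrt (6 + 3 * e) *
      P ^ ((d * e * k : ℝ) - (d * k : ℝ) / 2 + (e * k : ℝ) / 2 + (k : ℝ) / 2) := by
    calc P ^ (e * k) * S ≤ P ^ (e * k) * (Real.sqrt (6 + 3 * e) * P ^ ((M : ℝ)/2)) := by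
          apply mul_le_mul_of_nonneg_left hSle (by positivity)
      _ = Real.sqrt (6 + 3 * e) * (P ^ ((e * k : ℕ) : ℝ) * P ^ ((M : ℝ)/2)) := by
          rw [Real.rpow_natCast]; ring
      _ = Real.sqrt (6 + 3 * e) * P ^ (((e * k : ℕ) : ℝ) + (M : ℝ)/2) := by
          rw [← Real.rpow_add hP0]
      _ = Real.sqrt (6 + 3 * e) *
          P ^ ((d * e * k : ℝ) - (d * k : ℝ) / 2 + (e * k : ℝ) / 2 + (k : ℝ) / 2) := by
          congr 2
          have hd1 : ((d - 1 : ℕ) : ℝ) = (d : ℝ) - 1 := by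
            rw [Nat.cast_sub (by omega)]; norm_num
          have he1 : ((e - 1 : ℕ) : ℝ) = (e : ℝ) - 1 := by
            rw [Nat.cast_sub (by omega)]; norm_num
          simp only [hM]
          push_cast [hd1, he1]
          ring
  exact hmain
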